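/- arXiv:2202.01361 — 4 statements merged into one kernel-verified Lean document; each statement's English description precedes it below -/
import Mathlib

section
/- Suppose Z > 0, R : X → ℝ_{≥0}, and the triple (P_F, P_B, Z) satisfies trajectory balance for R, with P_B(s|s') > 0 for every edge s→s' of G. Let x, x' ∈ X, let 1 ≤ K ≤ D, let τ be a K-step backward trajectory from x ending at a state s, and let τ' be a K-step forward trajectory from s to x'. Then R(x)·P_B(τ|x)·P_F(τ') = R(x')·P_B(τ'|x')·P_F(τ). -/
/-!
Every state `s` is reachable from `s₀` (fill in its assigned entries one at a time), so `τ` and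
`τ'` both extend a common prefix `σ` from `s₀` to `s` to complete trajectories. Trajectory
balance for these gives `Z·P_F(σ)·P_F(τ) = R(x)·P_B(σ)·P_B(τ)` and
`Z·P_F(σ)·P_F(τ') = R(x')·P_B(σ)·P_B(τ')`; cross-multiplying eliminates `Z·P_F(σ)`, and the
common factor `P_B(σ)` is positive, hence cancels.
-/

open scoped BigOperators Classical

/-- The GFlowNet state space `S = {0,1,⊘}^D`: functions from `Fin D` to `Option Bool`,
with `none` denoting the unspecified entry `⊘`. -/
abbrev GState (D : ℕ) := Fin D → Option Bool

/-- The initial state `s₀`, with all entries `⊘`. -/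
def initState (D : ℕ) : GState D := fun _ => none

/-- `s'` is a child of `s` (edge `s → s'` of the DAG `G`): `s'` is obtained from `s`
by changing exactly one `⊘`-entry of `s` to `0` or `1`. -/
def IsChild {D : ℕ} (s s' : GState D) : Prop :=
  ∃ (i : Fin D) (b : Bool), s i = none ∧ s' = Function.update s i (some b)

/-- Terminal states: no `⊘`-entry. -/
def IsTerminal {D : ℕ} (s : GState D) : Prop := ∀ i, s i ≠ none

/-- The embedding of `X = {0,1}^D` as the set of terminal states. -/
def ofX {D : ℕ} (x : Fin D → Bool) : GState D := fun i => some (x i)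

/-- `|s|`: the number of non-`⊘` entries of `s`. -/
def numAssigned {D : ℕ} (s : GState D) : ℕ :=
  (Finset.univ.filter fun i => s i ≠ none).card

/-- A complete trajectory `τ = (t₀ → t₁ → ⋯ → t_n)`, encoded as the list of its states:
it starts at `s₀`, each consecutive pair is an edge of `G`, and it ends at a terminal state. -/
def IsCompleteTraj {D : ℕ} (l : List (GState D)) : Prop :=
  l.head? = some (initState D) ∧ l.Chain' IsChild ∧
    ∃ s, l.getLast? = some s ∧ IsTerminal s

/-- The trajectory `l` ends at the terminal state corresponding to `x ∈ X`. -/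
def EndsAt {D : ℕ} (l : List (GState D)) (x : Fin D → Bool) : Prop :=
  l.getLast? = some (ofX x)

/-- `PF` is a forward policy: for every nonterminal `s`, `PF s ·` is a probability
distribution supported on the children of `s` (`PF s s'` is `P_F(s'|s)`). -/
def IsForwardPolicy {D : ℕ} (PF : GState D → GState D → ℝ) : Prop :=
  ∀ s : GState D, ¬ IsTerminal s →
    (∀ s', 0 ≤ PF s s') ∧ (∀ s', PF s s' ≠ 0 → IsChild s s') ∧
    (∑ s' : GState D, PF s s' = 1)

/-- `PB` is a backward policy: for every noninitial `s'`, `PB s' ·` is a probability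
distribution supported on the parents of `s'` (`PB s' s` is `P_B(s|s')`). -/
def IsBackwardPolicy {D : ℕ} (PB : GState D → GState D → ℝ) : Prop :=
  ∀ s' : GState D, s' ≠ initState D →
    (∀ s, 0 ≤ PB s' s) ∧ (∀ s, PB s' s ≠ 0 → IsChild s s') ∧
    (∑ s : GState D, PB s' s = 1)

/-- `P_F(τ) = ∏_{i<n} P_F(t_{i+1}|t_i)` along a trajectory. -/
def trajPF {D : ℕ} (PF : GState D → GState D → ℝ) (l : List (GState D)) : ℝ :=
  ((l.zip l.tail).map fun p => PF p.1 p.2).prod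

/-- `P_B(τ|x) = ∏_{i<n} P_B(t_i|t_{i+1})` along a trajectory. -/
def trajPB {D : ℕ} (PB : GState D → GState D → ℝ) (l : List (GState D)) : ℝ :=
  ((l.zip l.tail).map fun p => PB p.2 p.1).prod

/-- Trajectory balance for reward `R`: `Z·P_F(τ) = R(x)·P_B(τ|x)` for every complete
trajectory `τ` ending at `x`. -/
def TrajBalance {D : ℕ} (PF PB : GState D → GState D → ℝ) (Z : ℝ)
    (R : (Fin D → Bool) → ℝ) : Prop :=
  ∀ (l : List (GState D)) (x : Fin D → Bool),
    IsCompleteTraj l → EndsAt l x → Z * trajPF PF l = R x * trajPB PB l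

/-- The terminating probability `P_T(x)`: the sum of `P_F(τ)` over all complete
trajectories ending at `x`. -/
noncomputable def PT {D : ℕ} (PF : GState D → GState D → ℝ) (x : Fin D → Bool) : ℝ :=
  ∑ᶠ l ∈ {l : List (GState D) | IsCompleteTraj l ∧ EndsAt l x}, trajPF PF l

/-- A path in `G` from `s` to `t`, encoded as the list of its states. -/
def IsPath {D : ℕ} (l : List (GState D)) (s t : GState D) : Prop :=
  l.Chain' IsChild ∧ l.head? = some s ∧ l.getLast? = some t
/-- The state flow `F(s)`: sum of `F(τ) = Z·P_F(τ)` over complete trajectories through `s`. -/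
noncomputable def stateFlow {D : ℕ} (PF : GState D → GState D → ℝ) (Z : ℝ)
    (s : GState D) : ℝ :=
  ∑ᶠ l ∈ {l : List (GState D) | IsCompleteTraj l ∧ s ∈ l}, Z * trajPF PF l

/-- The edge flow `F(s→s')`: sum of `F(τ) = Z·P_F(τ)` over complete trajectories
containing the edge `s → s'`. -/
noncomputable def edgeFlow {D : ℕ} (PF : GState D → GState D → ℝ) (Z : ℝ)
    (s s' : GState D) : ℝ :=
  ∑ᶠ l ∈ {l : List (GState D) | IsCompleteTraj l ∧ (s, s') ∈ l.zip l.tail}, Z * trajPF PF l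

/-- The Shannon entropy `H[P_F(·|s)]` of the forward policy at `s` (natural log,
with `0·log 0 = 0`). -/
noncomputable def stepEntropyF {D : ℕ} (PF : GState D → GState D → ℝ) (s : GState D) : ℝ :=
  ∑ s' : GState D, Real.negMulLog (PF s s')

/-- The entropy of the flow determined by `P_F`:
`H[P_F] = Σ_τ P_F(τ) · Σ_{i<n} H[P_F(·|t_i)]`. -/
noncomputable def flowEntropy {D : ℕ} (PF : GState D → GState D → ℝ) : ℝ :=
  ∑ᶠ l ∈ {l : List (GState D) | IsCompleteTraj l},
    trajPF PF l * (l.dropLast.map (stepEntropyF PF)).sum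

/-- The uniform backward policy `P_B°(s|s') = 1/|s'|` for each parent `s` of `s'`. -/
noncomputable def uniformBackward (D : ℕ) : GState D → GState D → ℝ :=
  fun s' s => if IsChild s s' then 1 / (numAssigned s' : ℝ) else 0

namespace List

variable {α : Type*}

theorem zip_tail_append_tail {σ τ : List α} {m : α} (hσ : σ.getLast? = some m)
    (hτ : τ.head? = some m) :
    (σ ++ τ.tail).zip (σ ++ τ.tail).tail = σ.zip σ.tail ++ τ.zip τ.tail := by
  obtain ⟨t, rfl⟩ : ∃ t, τ = m :: t := by cases τ <;> simp_all
  induction σ with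
  | nil => simp at hσ
  | cons a σ ih =>
    cases σ with
    | nil => simp_all
    | cons b σ => simp_all

end List

section Paths

variable {D : ℕ}

theorem reflTransGen_isChild_initState (s : GState D) :
    Relation.ReflTransGen IsChild (initState D) s := by
  suffices ∀ A : Finset (Fin D),
      Relation.ReflTransGen IsChild (initState D) (A.piecewise s (initState D)) by
    simpa using this Finset.univ
  intro A
  induction A using Finset.induction_on with
  | empty => simp [Relation.ReflTransGen.refl]
  | insert j A hj ih =>
    rw [Finset.piecewise_insert]
    cases hsj : s j with
    | none =>
      rwa [Function.update_eq_self_iff.mpr]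
      simp [Finset.piecewise_eq_of_notMem _ _ _ hj, initState]
    | some b =>
      exact ih.tail ⟨j, b, by simp [Finset.piecewise_eq_of_notMem _ _ _ hj, initState], rfl⟩

theorem exists_isPath_initState (s : GState D) : ∃ σ, IsPath σ (initState D) s := by
  obtain ⟨l, hl, hlast⟩ := List.exists_isChain_cons_of_relationReflTransGen
    (reflTransGen_isChild_initState s)
  exact ⟨initState D :: l, hl, rfl, by simp [List.getLast?_eq_some_getLast, hlast]⟩

theorem IsPath.append_tail {σ τ : List (GState D)} {a b c : GState D} (hσ : IsPath σ a b)
    (hτ : IsPath τ b c) : IsPath (σ ++ τ.tail) a c := by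
  obtain ⟨t, rfl⟩ : ∃ t, τ = b :: t := by cases τ <;> simp_all [IsPath]
  obtain ⟨hσc, hσh, hσl⟩ := hσ
  obtain ⟨hτc, -, hτl⟩ := hτ
  have hσne : σ ≠ [] := by rintro rfl; simp at hσh
  obtain ⟨hbt, ht⟩ := List.isChain_cons.mp hτc
  refine ⟨hσc.append ht ?_, by simp [List.head?_append_of_ne_nil _ hσne, hσh], ?_⟩
  · intro y hy z hz
    obtain rfl : b = y := by simpa [hσl] using hy
    exact hbt z hz
  · cases t <;> simp_all

theorem IsPath.isCompleteTraj {l : List (GState D)} {x : Fin D → Bool}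
    (h : IsPath l (initState D) (ofX x)) : IsCompleteTraj l :=
  ⟨h.2.1, h.1, ofX x, h.2.2, fun i => by simp [ofX]⟩

theorem trajPF_append_tail (PF : GState D → GState D → ℝ) {σ τ : List (GState D)}
    {m : GState D} (hσ : σ.getLast? = some m) (hτ : τ.head? = some m) :
    trajPF PF (σ ++ τ.tail) = trajPF PF σ * trajPF PF τ := by
  simp only [trajPF, List.zip_tail_append_tail hσ hτ, List.map_append, List.prod_append]

theorem trajPB_append_tail (PB : GState D → GState D → ℝ) {σ τ : List (GState D)}
    {m : GState D} (hσ : σ.getLast? = some m) (hτ : τ.head? = some m) :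
    trajPB PB (σ ++ τ.tail) = trajPB PB σ * trajPB PB τ := by
  simp only [trajPB, List.zip_tail_append_tail hσ hτ, List.map_append, List.prod_append]

theorem trajPB_pos {PB : GState D → GState D → ℝ}
    (hPB : ∀ s s' : GState D, IsChild s s' → 0 < PB s' s) :
    ∀ {l : List (GState D)}, l.IsChain IsChild → 0 < trajPB PB l
  | [], _ | [_], _ => by simp [trajPB]
  | a :: b :: l, h => by
    rw [List.isChain_cons_cons] at h
    have := trajPB_pos hPB h.2
    simp_all [trajPB]

end Paths

theorem statement1_general {D : ℕ}
    (PF PB : GState D → GState D → ℝ) (Z : ℝ)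
    (R : (Fin D → Bool) → ℝ)
    (hTB : TrajBalance PF PB Z R)
    (hBpos : ∀ s s' : GState D, IsChild s s' → 0 < PB s' s)
    (x x' : Fin D → Bool)
    (s : GState D)
    (τ τ' : List (GState D))
    (hτ : IsPath τ s (ofX x))
    (hτ' : IsPath τ' s (ofX x')) :
    R x * trajPB PB τ * trajPF PF τ' = R x' * trajPB PB τ' * trajPF PF τ := by
  obtain ⟨σ, hσ⟩ := exists_isPath_initState s
  have balance : ∀ {y ρ}, IsPath ρ s (ofX y) →
      Z * (trajPF PF σ * trajPF PF ρ) = R y * (trajPB PB σ * trajPB PB ρ) := by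
    intro y ρ hρ
    have hσρ := hσ.append_tail hρ
    rw [← trajPF_append_tail PF hσ.2.2 hρ.2.1, ← trajPB_append_tail PB hσ.2.2 hρ.2.1]
    exact hTB _ y hσρ.isCompleteTraj hσρ.2.2
  have hbal := balance hτ
  have hbal' := balance hτ'
  refine mul_left_cancel₀ (trajPB_pos hBpos hσ.1).ne' ?_
  linear_combination trajPF PF τ * hbal' - trajPF PF τ' * hbal

/-- If `(P_F, P_B, Z)` with `Z > 0` satisfies trajectory balance for a
nonnegative reward `R`, with `P_B` positive on every edge of `G`, then for any `K`-step
backward trajectory `τ` from `x` ending at `s` and `K`-step forward trajectory `τ'` from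
`s` to `x'`, one has `R(x)·P_B(τ|x)·P_F(τ') = R(x')·P_B(τ'|x')·P_F(τ)`. -/
theorem statement1 {D : ℕ} (hD : 1 ≤ D)
    (PF PB : GState D → GState D → ℝ) (Z : ℝ) (hZ : 0 < Z)
    (hPF : IsForwardPolicy PF) (hPB : IsBackwardPolicy PB)
    (R : (Fin D → Bool) → ℝ) (hR : ∀ x, 0 ≤ R x)
    (hTB : TrajBalance PF PB Z R)
    (hBpos : ∀ s s' : GState D, IsChild s s' → 0 < PB s' s)
    (x x' : Fin D → Bool) (K : ℕ) (hK1 : 1 ≤ K) (hKD : K ≤ D)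
    (s : GState D) (hs : numAssigned s = D - K)
    (τ τ' : List (GState D))
    (hτ : IsPath τ s (ofX x)) (hτlen : τ.length = K + 1)
    (hτ' : IsPath τ' s (ofX x')) (hτ'len : τ'.length = K + 1) :
    R x * trajPB PB τ * trajPF PF τ' = R x' * trajPB PB τ' * trajPF PF τ :=
  statement1_general PF PB Z R hTB hBpos x x' s τ τ' hτ hτ'
end

section
/- Suppose Z > 0, R : X → ℝ_{≥0}, and the triple (P_F, P_B, Z) satisfies trajectory balance for R. Then for every x ∈ X, the terminating probability satisfies P_T(x) = R(x)/Z; consequently Z = Σ_{x∈X} R(x) and P_T(x) is proportional to R(x). -/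
/-!
Summing trajectory balance `Z·P_F(τ) = R(x)·P_B(τ|x)` over the complete trajectories ending at
`x` gives `Z·P_T(x) = R(x)`, since the backward probabilities `P_B(τ|x)` of the trajectories into
`x` sum to one; and `Σ_x P_T(x) = 1`, since the forward probabilities of all complete trajectories
sum to one, so `Z = Σ_x R(x)`. Both normalisations are the same fact: a Markov kernel on a finite
DAG, run until it hits a sink, puts total mass one on the maximal paths (induction along the DAG).
The backward case is the forward one on the reversed DAG, whose only sink is `s₀`.
-/

open scoped BigOperators Classical

section MaximalPaths

variable {α : Type*}

def pathProd (P : α → α → ℝ) (l : List α) : ℝ :=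
  ((l.zip l.tail).map fun p => P p.1 p.2).prod

@[simp]
lemma pathProd_singleton (P : α → α → ℝ) (a : α) : pathProd P [a] = 1 := rfl

@[simp]
lemma pathProd_cons_cons (P : α → α → ℝ) (a b : α) (l : List α) :
    pathProd P (a :: b :: l) = P a b * pathProd P (b :: l) := by
  simp [pathProd]

lemma pathProd_append_cons (P : α → α → ℝ) (l₁ : List α) (a : α) (l₂ : List α) :
    pathProd P (l₁ ++ a :: l₂) = pathProd P (l₁ ++ [a]) * pathProd P (a :: l₂) := by
  induction l₁ with
  | nil => simp
  | cons b l₁ ih =>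
    cases l₁ with
    | nil => simp
    | cons c l₁ =>
      simp only [List.cons_append, pathProd_cons_cons] at ih ⊢
      rw [ih, mul_assoc]

lemma pathProd_reverse (P : α → α → ℝ) (l : List α) :
    pathProd P l.reverse = pathProd (flip P) l := by
  induction l with
  | nil => rfl
  | cons a l ih =>
    cases l with
    | nil => rfl
    | cons b l =>
      rw [List.reverse_cons, List.reverse_cons, List.append_assoc, List.singleton_append,
        pathProd_append_cons, ← List.reverse_cons, ih, pathProd_cons_cons, pathProd_cons_cons,
        pathProd_singleton, mul_one, mul_comm]
      rfl

variable (r : α → α → Prop)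

def maximalPathsFrom (a : α) : Set (List α) :=
  {l | l.head? = some a ∧ l.IsChain r ∧ ∃ t, l.getLast? = some t ∧ ∀ b, ¬ r t b}

lemma maximalPathsFrom_of_forall_not {a : α} (ha : ∀ b, ¬ r a b) :
    maximalPathsFrom r a = {[a]} := by
  ext l
  constructor
  · rintro ⟨hhead, hchain, -⟩
    obtain ⟨l, rfl⟩ := List.head?_eq_some_iff.mp hhead
    cases l with
    | nil => rfl
    | cons b l => exact absurd (List.isChain_cons_cons.mp hchain).1 (ha b)
  · rintro rfl
    exact ⟨rfl, List.isChain_singleton a, a, rfl, ha⟩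

lemma maximalPathsFrom_eq_biUnion {a : α} (ha : ∃ b, r a b) :
    maximalPathsFrom r a = ⋃ b ∈ {b | r a b}, List.cons a '' maximalPathsFrom r b := by
  ext l
  simp only [Set.mem_iUnion, Set.mem_image, Set.mem_ofPred_eq]
  constructor
  · rintro ⟨hhead, hchain, t, hlast, ht⟩
    obtain ⟨l, rfl⟩ := List.head?_eq_some_iff.mp hhead
    cases l with
    | nil =>
      obtain ⟨b, hab⟩ := ha
      obtain rfl : a = t := by simpa using hlast
      exact absurd hab (ht b)
    | cons b l =>
      obtain ⟨hab, hchain⟩ := List.isChain_cons_cons.mp hchain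
      exact ⟨b, hab, b :: l, ⟨rfl, hchain, t, by simpa using hlast, ht⟩, rfl⟩
  · rintro ⟨b, hab, l, ⟨hhead, hchain, t, hlast, ht⟩, rfl⟩
    obtain ⟨l, rfl⟩ := List.head?_eq_some_iff.mp hhead
    exact ⟨rfl, List.isChain_cons_cons.mpr ⟨hab, hchain⟩, t, by simpa using hlast, ht⟩

lemma disjoint_maximalPathsFrom {a b : α} (hab : a ≠ b) :
    Disjoint (maximalPathsFrom r a) (maximalPathsFrom r b) :=
  Set.disjoint_left.mpr fun _ ha hb => hab (Option.some_injective _ (ha.1.symm.trans hb.1))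

lemma finite_maximalPathsFrom [Finite α] (hwf : WellFounded (flip r)) (a : α) :
    (maximalPathsFrom r a).Finite := by
  induction a using hwf.induction with
  | _ a ih =>
    by_cases ha : ∃ b, r a b
    · rw [maximalPathsFrom_eq_biUnion r ha]
      exact Set.Finite.biUnion (Set.toFinite _) fun b hab => (ih b hab).image _
    · rw [maximalPathsFrom_of_forall_not r (not_exists.mp ha)]
      exact Set.finite_singleton _

lemma sum_pathProd_maximalPathsFrom [Fintype α] (hwf : WellFounded (flip r))
    (P : α → α → ℝ) (hP : ∀ a, (∃ b, r a b) → (∀ b, P a b ≠ 0 → r a b) ∧ ∑ b, P a b = 1)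
    (a : α) : ∑ᶠ l ∈ maximalPathsFrom r a, pathProd P l = 1 := by
  induction a using hwf.induction with
  | _ a ih =>
    by_cases ha : ∃ b, r a b
    · obtain ⟨hsupp, hsum⟩ := hP a ha
      have hstep : ∀ b ∈ {b | r a b},
          ∑ᶠ l ∈ List.cons a '' maximalPathsFrom r b, pathProd P l = P a b := by
        intro b hab
        rw [finsum_mem_image List.cons_injective.injOn, ← mul_one (P a b), ← ih b hab,
          mul_finsum_mem]
        refine finsum_mem_congr rfl fun l hl => ?_
        obtain ⟨l, rfl⟩ := List.head?_eq_some_iff.mp hl.1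
        exact pathProd_cons_cons P a b l
      rw [maximalPathsFrom_eq_biUnion r ha,
        finsum_mem_biUnion
          (fun b _ c _ hbc => (Set.disjoint_image_iff List.cons_injective).mpr
            (disjoint_maximalPathsFrom r hbc))
          (Set.toFinite _) fun b _ => (finite_maximalPathsFrom r hwf b).image _,
        finsum_mem_congr rfl hstep, finsum_mem_def,
        (Set.indicator_eq_self (s := {b | r a b})).mpr fun b hb => hsupp b hb,
        finsum_eq_sum_of_fintype, hsum]
    · rw [maximalPathsFrom_of_forall_not r (not_exists.mp ha), finsum_mem_singleton,
        pathProd_singleton]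

end MaximalPaths

section GFlowNet

variable {D : ℕ}

lemma numAssigned_le (s : GState D) : numAssigned s ≤ D :=
  (Finset.card_filter_le _ _).trans_eq (Finset.card_fin D)

lemma IsChild.numAssigned_lt {s s' : GState D} (h : IsChild s s') :
    numAssigned s < numAssigned s' := by
  obtain ⟨i, b, hi, rfl⟩ := h
  refine Finset.card_lt_card ⟨fun j hj => ?_, fun hsub => ?_⟩
  · rcases eq_or_ne j i with rfl | hji
    · simp
    · simpa [Function.update_of_ne hji] using hj
  · simpa [hi] using hsub (show i ∈ _ by simp)

lemma wellFounded_isChild : WellFounded (@IsChild D) :=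
  (InvImage.wf numAssigned wellFounded_lt).mono fun _ _ h => h.numAssigned_lt

lemma wellFounded_flip_isChild : WellFounded (flip (@IsChild D)) :=
  (InvImage.wf (fun s => D - numAssigned s) wellFounded_lt).mono fun s _ h => by
    have := numAssigned_le s
    have := h.numAssigned_lt
    simp only [InvImage]
    omega

lemma isTerminal_iff_forall_not_isChild (s : GState D) :
    IsTerminal s ↔ ∀ s', ¬ IsChild s s' :=
  ⟨fun h _ ⟨i, _, hi, _⟩ => h i hi, fun h i hi => h _ ⟨i, true, hi, rfl⟩⟩

lemma eq_initState_iff_forall_not_isChild (s : GState D) :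
    s = initState D ↔ ∀ s', ¬ IsChild s' s := by
  constructor
  · rintro rfl s' ⟨i, b, -, he⟩
    simpa [initState] using congrFun he i
  · intro h
    funext i
    by_contra hi
    obtain ⟨b, hb⟩ := Option.ne_none_iff_exists'.mp hi
    exact h (Function.update s i none) ⟨i, b, by simp, by rw [Function.update_idem, ← hb,
      Function.update_eq_self]⟩

lemma ofX_injective : Function.Injective (@ofX D) :=
  fun _ _ h => funext fun i => Option.some_injective _ (congrFun h i)

lemma IsTerminal.exists_ofX_eq {s : GState D} (h : IsTerminal s) : ∃ x, ofX x = s :=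
  ⟨fun i => (s i).get (Option.isSome_iff_ne_none.mpr (h i)), funext fun i => by simp [ofX]⟩

lemma setOf_isCompleteTraj :
    {l | IsCompleteTraj l} = maximalPathsFrom IsChild (initState D) := by
  ext l
  simp only [IsCompleteTraj, isTerminal_iff_forall_not_isChild]
  rfl

lemma setOf_isCompleteTraj_endsAt (x : Fin D → Bool) :
    {l | IsCompleteTraj l ∧ EndsAt l x} =
      List.reverse '' maximalPathsFrom (flip IsChild) (ofX x) := by
  rw [List.reverse_involutive.image_eq_preimage_symm]
  ext l
  simp only [Set.mem_preimage, maximalPathsFrom, Set.mem_ofPred_eq, List.head?_reverse,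
    List.getLast?_reverse, List.isChain_reverse, IsCompleteTraj, EndsAt, flip,
    ← eq_initState_iff_forall_not_isChild]
  constructor
  · rintro ⟨⟨hhead, hchain, -⟩, hlast⟩
    exact ⟨hlast, hchain, _, hhead, rfl⟩
  · rintro ⟨hlast, hchain, _, hhead, rfl⟩
    exact ⟨⟨hhead, hchain, _, hlast, fun i => by simp [ofX]⟩, hlast⟩

lemma finite_setOf_isCompleteTraj : {l : List (GState D) | IsCompleteTraj l}.Finite := by
  rw [setOf_isCompleteTraj]
  exact finite_maximalPathsFrom _ wellFounded_flip_isChild _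

lemma setOf_isCompleteTraj_eq_iUnion :
    {l | IsCompleteTraj l} = ⋃ x : Fin D → Bool, {l | IsCompleteTraj l ∧ EndsAt l x} := by
  ext l
  simp only [Set.mem_iUnion, Set.mem_ofPred_eq]
  refine ⟨fun hl => ?_, fun ⟨_, hl, _⟩ => hl⟩
  obtain ⟨t, hlast, ht⟩ := hl.2.2
  obtain ⟨x, rfl⟩ := ht.exists_ofX_eq
  exact ⟨x, hl, hlast⟩

lemma sum_trajPF_isCompleteTraj {PF : GState D → GState D → ℝ} (hPF : IsForwardPolicy PF) :
    ∑ᶠ l ∈ {l | IsCompleteTraj l}, trajPF PF l = 1 := by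
  rw [setOf_isCompleteTraj]
  exact sum_pathProd_maximalPathsFrom _ wellFounded_flip_isChild PF
    (fun s hs => (hPF s (by rwa [isTerminal_iff_forall_not_isChild, not_forall_not])).2) _

lemma sum_trajPB_endsAt {PB : GState D → GState D → ℝ} (hPB : IsBackwardPolicy PB)
    (x : Fin D → Bool) : ∑ᶠ l ∈ {l | IsCompleteTraj l ∧ EndsAt l x}, trajPB PB l = 1 := by
  rw [setOf_isCompleteTraj_endsAt, finsum_mem_image List.reverse_injective.injOn]
  refine (finsum_mem_congr rfl fun l _ => pathProd_reverse (flip PB) l).trans ?_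
  exact sum_pathProd_maximalPathsFrom _ wellFounded_isChild PB
    (fun s hs => (hPB s (by rwa [Ne, eq_initState_iff_forall_not_isChild, not_forall_not])).2) _

lemma sum_PT {PF : GState D → GState D → ℝ} (hPF : IsForwardPolicy PF) :
    ∑ x, PT PF x = 1 := by
  rw [← sum_trajPF_isCompleteTraj hPF, setOf_isCompleteTraj_eq_iUnion,
    finsum_mem_iUnion
      (fun x y hxy => Set.disjoint_left.mpr fun _ hx hy =>
        hxy (ofX_injective (Option.some_injective _ (hx.2.symm.trans hy.2))))
      fun x => finite_setOf_isCompleteTraj.subset fun _ hl => hl.1,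
    finsum_eq_sum_of_fintype]
  rfl

end GFlowNet

theorem statement2_general {D : ℕ}
    (PF PB : GState D → GState D → ℝ) (Z : ℝ) (hZ : 0 < Z)
    (hPF : IsForwardPolicy PF) (hPB : IsBackwardPolicy PB)
    (R : (Fin D → Bool) → ℝ)
    (hTB : TrajBalance PF PB Z R) :
    (∀ x : Fin D → Bool, PT PF x = R x / Z) ∧ Z = ∑ x : Fin D → Bool, R x := by
  have hPT : ∀ x, PT PF x = R x / Z := fun x => by
    rw [eq_div_iff hZ.ne', mul_comm, PT, mul_finsum_mem,
      finsum_mem_congr rfl fun l hl => hTB l x hl.1 hl.2, ← mul_finsum_mem,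
      sum_trajPB_endsAt hPB, mul_one]
  refine ⟨hPT, ?_⟩
  have htotal := sum_PT hPF
  rw [Finset.sum_congr rfl fun x _ => hPT x, ← Finset.sum_div, div_eq_one_iff_eq hZ.ne'] at htotal
  exact htotal.symm

/-- If `(P_F, P_B, Z)` with `Z > 0` satisfies trajectory balance for a
nonnegative reward `R`, then `P_T(x) = R(x)/Z` for every `x ∈ X`; consequently
`Z = Σ_{x∈X} R(x)` (and in particular `P_T ∝ R`). -/
theorem statement2 {D : ℕ} (hD : 1 ≤ D)
    (PF PB : GState D → GState D → ℝ) (Z : ℝ) (hZ : 0 < Z)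
    (hPF : IsForwardPolicy PF) (hPB : IsBackwardPolicy PB)
    (R : (Fin D → Bool) → ℝ) (hR : ∀ x, 0 ≤ R x)
    (hTB : TrajBalance PF PB Z R) :
    (∀ x : Fin D → Bool, PT PF x = R x / Z) ∧ Z = ∑ x : Fin D → Bool, R x :=
  statement2_general PF PB Z hZ hPF hPB R hTB
end

section
/- For any forward policy P_F, the sum of P_F(τ) over all complete trajectories τ equals 1; equivalently, the terminating probability P_T is a probability distribution on X, i.e. Σ_{x∈X} P_T(x) = 1. -/
open scoped BigOperators Classical

section Aux

lemma numAssigned_child {D : ℕ} {s s' : GState D} (h : IsChild s s') :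
    numAssigned s' = numAssigned s + 1 := by
  obtain ⟨i, b, hi, rfl⟩ := h
  unfold numAssigned
  have hset : (Finset.univ.filter fun j => Function.update s i (some b) j ≠ none)
      = insert i (Finset.univ.filter fun j => s j ≠ none) := by
    ext j
    by_cases hj : j = i <;> simp [Function.update_apply, hj, hi]
  rw [hset, Finset.card_insert_of_notMem (by simp [hi])]

lemma isTerminal_iff {D : ℕ} {s : GState D} : IsTerminal s ↔ numAssigned s = D := by
  unfold IsTerminal numAssigned
  constructor
  · intro h
    rw [Finset.filter_true_of_mem (fun i _ => h i)]
    simp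
  · intro h i hni
    have huniv : (Finset.univ.filter fun i : Fin D => s i ≠ none) = Finset.univ :=
      Finset.eq_univ_of_card _ (by simpa using h)
    have hi : i ∈ Finset.univ.filter fun i : Fin D => s i ≠ none := by
      rw [huniv]; exact Finset.mem_univ i
    exact (Finset.mem_filter.mp hi).2 hni

lemma not_isChild_of_terminal {D : ℕ} {s s' : GState D} (h : IsTerminal s) :
    ¬ IsChild s s' := by
  rintro ⟨i, b, hi, -⟩; exact h i hi

/-- Finset of trajectories of exactly `n` steps starting at `s`. -/
noncomputable def trajs (D : ℕ) : ℕ → GState D → Finset (List (GState D))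
  | 0, s => {[s]}
  | (n+1), s => Finset.univ.biUnion fun s' : GState D =>
      if IsChild s s' then (trajs D n s').image (List.cons s) else ∅

lemma head_of_mem_trajs {D n : ℕ} {s : GState D} {l : List (GState D)}
    (h : l ∈ trajs D n s) : l.head? = some s := by
  cases n with
  | zero => simp only [trajs, Finset.mem_singleton] at h; subst h; rfl
  | succ n =>
    simp only [trajs, Finset.mem_biUnion] at h
    obtain ⟨s', -, h⟩ := h
    by_cases hc : IsChild s s'
    · rw [if_pos hc] at h
      obtain ⟨l', -, rfl⟩ := Finset.mem_image.mp h
      rfl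
    · rw [if_neg hc] at h; simp at h

lemma trajPF_cons {D : ℕ} (PF : GState D → GState D → ℝ) {s a : GState D}
    {r : List (GState D)} :
    trajPF PF (s :: a :: r) = PF s a * trajPF PF (a :: r) := by
  simp [trajPF]

lemma sum_trajs {D : ℕ} {PF : GState D → GState D → ℝ} (hPF : IsForwardPolicy PF) :
    ∀ (n : ℕ) (s : GState D), numAssigned s + n = D →
      ∑ l ∈ trajs D n s, trajPF PF l = 1 := by
  intro n
  induction n with
  | zero =>
    intro s hs
    simp [trajs, trajPF]
  | succ n ih =>
    intro s hs
    have hterm : ¬ IsTerminal s := by rw [isTerminal_iff]; omega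
    obtain ⟨hnn, hsupp, hsum⟩ := hPF s hterm
    rw [trajs, Finset.sum_biUnion]
    · rw [← hsum]
      apply Finset.sum_congr rfl
      intro s' _
      by_cases hc : IsChild s s'
      · rw [if_pos hc, Finset.sum_image (by intro a _ b _ hab; simpa using hab)]
        have hcong : ∀ l ∈ trajs D n s', trajPF PF (s :: l) = PF s s' * trajPF PF l := by
          intro l hl
          have hh := head_of_mem_trajs hl
          cases l with
          | nil => simp at hh
          | cons a r =>
            simp only [List.head?_cons, Option.some.injEq] at hh; subst hh
            exact trajPF_cons PF
        rw [Finset.sum_congr rfl hcong, ← Finset.mul_sum,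
          ih s' (by rw [numAssigned_child hc]; omega), mul_one]
      · rw [if_neg hc]
        simp only [Finset.sum_empty]
        symm; by_contra h
        exact hc (hsupp s' h)
    · intro a _ b _ hab
      simp only [Function.onFun]
      rw [Finset.disjoint_left]
      intro l hla hlb
      apply hab
      by_cases hca : IsChild s a
      · rw [if_pos hca] at hla
        obtain ⟨la, hla', rfl⟩ := Finset.mem_image.mp hla
        by_cases hcb : IsChild s b
        · rw [if_pos hcb] at hlb
          obtain ⟨lb, hlb', heq⟩ := Finset.mem_image.mp hlb
          have hlab : lb = la := by simpa using heq
          subst hlab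
          have h1 := head_of_mem_trajs hla'
          have h2 := head_of_mem_trajs hlb'
          rw [h1] at h2
          exact Option.some.inj h2
        · rw [if_neg hcb] at hlb; simp at hlb
      · rw [if_neg hca] at hla; simp at hla

lemma mem_trajs_iff {D : ℕ} :
    ∀ (n : ℕ) (s : GState D) (l : List (GState D)), numAssigned s + n = D →
    (l ∈ trajs D n s ↔
      (l.head? = some s ∧ l.Chain' IsChild ∧ ∃ t, l.getLast? = some t ∧ IsTerminal t)) := by
  intro n
  induction n with
  | zero =>
    intro s l hs
    have hterm : IsTerminal s := isTerminal_iff.mpr (by omega)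
    constructor
    · intro h
      simp only [trajs, Finset.mem_singleton] at h; subst h
      exact ⟨rfl, List.isChain_singleton _, s, rfl, hterm⟩
    · rintro ⟨hh, hch, t, hlast, ht⟩
      cases l with
      | nil => simp at hh
      | cons a rest =>
        simp only [List.head?_cons, Option.some.injEq] at hh; subst hh
        cases rest with
        | nil => simp [trajs]
        | cons b r =>
          exact absurd (List.isChain_cons_cons.mp hch).1 (not_isChild_of_terminal hterm)
  | succ n ih =>
    intro s l hs
    have hterm : ¬ IsTerminal s := by rw [isTerminal_iff]; omega
    constructor
    · intro h
      simp only [trajs, Finset.mem_biUnion] at h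
      obtain ⟨s', -, h⟩ := h
      by_cases hc : IsChild s s'
      swap
      · rw [if_neg hc] at h; simp at h
      rw [if_pos hc] at h
      obtain ⟨l', hl', rfl⟩ := Finset.mem_image.mp h
      have hns' : numAssigned s' + n = D := by rw [numAssigned_child hc]; omega
      obtain ⟨hh', hch', t, hlast', ht⟩ := (ih s' l' hns').mp hl'
      cases l' with
      | nil => simp at hh'
      | cons a r =>
        simp only [List.head?_cons, Option.some.injEq] at hh'; subst hh'
        refine ⟨rfl, List.isChain_cons_cons.mpr ⟨hc, hch'⟩, t, ?_, ht⟩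
        rw [List.getLast?_cons_cons]
        exact hlast'
    · rintro ⟨hh, hch, t, hlast, ht⟩
      cases l with
      | nil => simp at hh
      | cons a rest =>
        simp only [List.head?_cons, Option.some.injEq] at hh; subst hh
        cases rest with
        | nil =>
          simp only [List.getLast?_singleton, Option.some.injEq] at hlast
          subst hlast; exact absurd ht hterm
        | cons b r =>
          have hc : IsChild a b := (List.isChain_cons_cons.mp hch).1
          have hmem : (b :: r) ∈ trajs D n b := by
            apply (ih b (b :: r) (by rw [numAssigned_child hc]; omega)).mpr
            refine ⟨rfl, (List.isChain_cons_cons.mp hch).2, t, ?_, ht⟩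
            rw [List.getLast?_cons_cons] at hlast
            exact hlast
          simp only [trajs, Finset.mem_biUnion]
          exact ⟨b, Finset.mem_univ b,
            by rw [if_pos hc]; exact Finset.mem_image_of_mem _ hmem⟩

end Aux

/-- For any forward policy `P_F`, the sum of `P_F(τ)` over all complete
trajectories `τ` equals `1`; equivalently, `P_T` is a probability distribution on `X`:
`Σ_{x∈X} P_T(x) = 1`. -/
theorem statement4 {D : ℕ} (hD : 1 ≤ D)
    (PF : GState D → GState D → ℝ) (hPF : IsForwardPolicy PF) :
    (∑ᶠ l ∈ {l : List (GState D) | IsCompleteTraj l}, trajPF PF l = 1) ∧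
    (∑ x : Fin D → Bool, PT PF x = 1) := by
  have h0 : numAssigned (initState D) = 0 := by
    simp [numAssigned, initState]
  have hmem : ∀ l : List (GState D),
      IsCompleteTraj l ↔ l ∈ trajs D D (initState D) := by
    intro l
    rw [mem_trajs_iff D (initState D) l (by omega)]
    exact Iff.rfl
  have hset : {l : List (GState D) | IsCompleteTraj l}
      = ↑(trajs D D (initState D)) := by
    ext l; simpa using hmem l
  have h1 : ∑ᶠ l ∈ {l : List (GState D) | IsCompleteTraj l}, trajPF PF l = 1 := by
    rw [hset, finsum_mem_coe_finset, sum_trajs hPF D _ (by omega)]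
  refine ⟨h1, ?_⟩
  have hpt : ∀ x, PT PF x =
      ∑ l ∈ (trajs D D (initState D)).filter (fun l => EndsAt l x), trajPF PF l := by
    intro x
    rw [PT, ← finsum_mem_coe_finset]
    congr 1
    ext l
    simp only [Set.mem_setOf_eq, Finset.coe_filter, Finset.mem_coe, hmem l]
  calc ∑ x : Fin D → Bool, PT PF x
      = ∑ x : Fin D → Bool, ∑ l ∈ trajs D D (initState D),
          if EndsAt l x then trajPF PF l else 0 := by
        simp [hpt, Finset.sum_filter]
    _ = ∑ l ∈ trajs D D (initState D), ∑ x : Fin D → Bool,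
          if EndsAt l x then trajPF PF l else 0 := Finset.sum_comm
    _ = ∑ l ∈ trajs D D (initState D), trajPF PF l := by
        apply Finset.sum_congr rfl
        intro l hl
        obtain ⟨-, -, t, hlast, ht⟩ := (hmem l).mpr hl
        set x0 : Fin D → Bool := fun i => (t i).getD false with hx0def
        have hx0 : ofX x0 = t := by
          funext i
          cases hti : t i with
          | none => exact absurd hti (ht i)
          | some b => simp [ofX, hx0def, hti]
        have hend : ∀ x : Fin D → Bool, EndsAt l x ↔ x = x0 := by
          intro x
          unfold EndsAt
          rw [hlast]
          constructor
          · intro h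
            have hxt : ofX x = t := (Option.some.inj h).symm
            funext i
            have := congrFun (hxt.trans hx0.symm) i
            exact Option.some.inj this
          · rintro rfl; rw [hx0]
        rw [Finset.sum_eq_single x0]
        · rw [if_pos ((hend x0).mpr rfl)]
        · intro x _ hx
          rw [if_neg (fun h => hx ((hend x).mp h))]
        · intro h; exact absurd (Finset.mem_univ x0) h
    _ = 1 := sum_trajs hPF D _ (by omega)
end

section
/- Let P_F be a forward policy and Z > 0, with state flows F(s) and edge flows F(s→s'). Then for every nonterminal state s, F(s) = Σ_{children s' of s} F(s→s'), and for every state s ≠ s₀, F(s) = Σ_{parents s'' of s} F(s''→s). -/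
open scoped BigOperators Classical

/-!
Along an edge `s → s'` the number of assigned entries grows by one, so a complete trajectory
visits each state at most once. Hence a trajectory through a nonterminal `s` leaves `s` along
exactly one edge, and a trajectory through `s ≠ s₀` enters `s` along exactly one edge; both
identities follow by exchanging the sum over trajectories with the sum over these edges.
-/

namespace List

variable {α : Type*}

theorem mem_zip_tail_iff {l : List α} {a b : α} :
    (a, b) ∈ l.zip l.tail ↔ ∃ (i : ℕ) (h : i + 1 < l.length), l[i] = a ∧ l[i + 1] = b := by
  simp only [mem_iff_getElem, getElem_zip, getElem_tail, length_zip, length_tail, Prod.mk.injEq]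
  exact ⟨fun ⟨i, _, h⟩ => ⟨i, by omega, h⟩, fun ⟨i, _, h⟩ => ⟨i, by omega, h⟩⟩

theorem IsChain.rel_of_mem_zip_tail {R : α → α → Prop} {l : List α} (hl : l.IsChain R) {a b : α}
    (hab : (a, b) ∈ l.zip l.tail) : R a b := by
  obtain ⟨i, hi, rfl, rfl⟩ := mem_zip_tail_iff.1 hab
  exact hl.getElem i hi

theorem Nodup.existsUnique_mem_zip_tail_of_getLast?_ne {l : List α} (hl : l.Nodup) {a : α}
    (ha : a ∈ l) (hlast : l.getLast? ≠ some a) : ∃! b, (a, b) ∈ l.zip l.tail := by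
  obtain ⟨i, hi, rfl⟩ := mem_iff_getElem.1 ha
  have hi' : i + 1 < l.length := by
    by_contra h
    apply hlast
    rw [getLast?_eq_getElem?, show l.length - 1 = i by omega, getElem?_eq_getElem hi]
  refine ⟨l[i + 1], mem_zip_tail_iff.2 ⟨i, hi', rfl, rfl⟩, fun b hb => ?_⟩
  obtain ⟨j, _, hji, rfl⟩ := mem_zip_tail_iff.1 hb
  obtain rfl := hl.getElem_inj_iff.1 hji
  rfl

theorem Nodup.existsUnique_mem_zip_tail_of_head?_ne {l : List α} (hl : l.Nodup) {b : α}
    (hb : b ∈ l) (hhead : l.head? ≠ some b) : ∃! a, (a, b) ∈ l.zip l.tail := by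
  obtain ⟨i, hi, rfl⟩ := mem_iff_getElem.1 hb
  obtain ⟨j, rfl⟩ : ∃ j, i = j + 1 := by
    refine Nat.exists_eq_add_one.2 (Nat.pos_of_ne_zero ?_)
    rintro rfl
    exact hhead (by rw [head?_eq_getElem?, getElem?_eq_getElem hi])
  refine ⟨l[j], mem_zip_tail_iff.2 ⟨j, hi, rfl, rfl⟩, fun a ha => ?_⟩
  obtain ⟨k, _, rfl, hkj⟩ := mem_zip_tail_iff.1 ha
  obtain rfl : k = j := by simpa using hl.getElem_inj_iff.1 hkj
  rfl

theorem IsChain.nodup_of_lt_comp {β : Type*} [Preorder β] {f : α → β} {R : α → α → Prop}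
    (hR : ∀ a b, R a b → f a < f b) {l : List α} (hl : l.IsChain R) : l.Nodup := by
  have : (l.map f).IsChain (· < ·) := (isChain_map f).2 (hl.imp hR)
  exact this.pairwise.nodup.of_map f

end List

theorem Finset.sum_filter_eq_sum_sum_filter_of_existsUnique {ι κ M : Type*} [AddCommMonoid M]
    {s : Finset ι} {t : Finset κ} {p : ι → Prop} {r : ι → κ → Prop} [DecidablePred p]
    [∀ i j, Decidable (r i j)] (hr : ∀ i ∈ s, ∀ j, r i j → p i ∧ j ∈ t)
    (hp : ∀ i ∈ s, p i → ∃! j, r i j) (f : ι → M) :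
    ∑ i ∈ s with p i, f i = ∑ j ∈ t, ∑ i ∈ s with r i j, f i := by
  simp only [Finset.sum_filter]
  rw [Finset.sum_comm]
  refine Finset.sum_congr rfl fun i hi => ?_
  by_cases hpi : p i
  · obtain ⟨j, hij, hj⟩ := hp i hi hpi
    rw [if_pos hpi, Finset.sum_eq_single_of_mem j (hr i hi j hij).2
      fun k _ hkj => if_neg fun hik => hkj (hj k hik), if_pos hij]
  · rw [if_neg hpi]
    exact (Finset.sum_eq_zero fun j _ => if_neg fun hij => hpi (hr i hi j hij).1).symm

theorem finsum_mem_setOf_and_eq_sum_filter {α M : Type*} [AddCommMonoid M] {p q : α → Prop}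
    [DecidablePred q] (hp : {x | p x}.Finite) (f : α → M) :
    ∑ᶠ x ∈ {x | p x ∧ q x}, f x = ∑ x ∈ hp.toFinset with q x, f x := by
  rw [← finsum_mem_coe_finset]
  congr 1
  ext x
  simp

theorem numAssigned_lt_of_isChild {D : ℕ} {s s' : GState D} (h : IsChild s s') :
    numAssigned s < numAssigned s' := by
  obtain ⟨i, b, hi, rfl⟩ := h
  refine Finset.card_lt_card ((Finset.ssubset_iff_of_subset fun j hj => ?_).2
    ⟨i, by simp, by simp [hi]⟩)
  simp only [Finset.mem_filter, Finset.mem_univ, true_and] at hj ⊢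
  rcases eq_or_ne j i with rfl | _ <;> simp_all

namespace IsCompleteTraj

variable {D : ℕ} {l : List (GState D)}

theorem nodup (hl : IsCompleteTraj l) : l.Nodup :=
  hl.2.1.nodup_of_lt_comp fun _ _ h => numAssigned_lt_of_isChild h

theorem isChild_of_mem_zip_tail (hl : IsCompleteTraj l) {s s' : GState D}
    (h : (s, s') ∈ l.zip l.tail) : IsChild s s' :=
  hl.2.1.rel_of_mem_zip_tail h

theorem existsUnique_succ (hl : IsCompleteTraj l) {s : GState D} (hs : s ∈ l)
    (hst : ¬ IsTerminal s) : ∃! s', (s, s') ∈ l.zip l.tail := by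
  obtain ⟨t, hlast, ht⟩ := hl.2.2
  refine hl.nodup.existsUnique_mem_zip_tail_of_getLast?_ne hs ?_
  rw [hlast, Ne, Option.some_inj]
  rintro rfl
  exact hst ht

theorem existsUnique_pred (hl : IsCompleteTraj l) {s : GState D} (hs : s ∈ l)
    (hs₀ : s ≠ initState D) : ∃! s'', (s'', s) ∈ l.zip l.tail :=
  hl.nodup.existsUnique_mem_zip_tail_of_head?_ne hs (by rw [hl.1]; simpa using hs₀.symm)

end IsCompleteTraj

theorem setOf_isCompleteTraj_finite (D : ℕ) : {l : List (GState D) | IsCompleteTraj l}.Finite :=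
  (List.finite_length_le (GState D) (Fintype.card (GState D))).subset
    fun _ hl => hl.nodup.length_le_card

noncomputable def completeTrajs (D : ℕ) : Finset (List (GState D)) :=
  (setOf_isCompleteTraj_finite D).toFinset

theorem mem_completeTrajs {D : ℕ} {l : List (GState D)} :
    l ∈ completeTrajs D ↔ IsCompleteTraj l :=
  Set.Finite.mem_toFinset _

section Flows

variable {D : ℕ} (PF : GState D → GState D → ℝ) (Z : ℝ)

theorem stateFlow_eq_sum (s : GState D) :
    stateFlow PF Z s = ∑ l ∈ completeTrajs D with s ∈ l, Z * trajPF PF l :=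
  finsum_mem_setOf_and_eq_sum_filter (setOf_isCompleteTraj_finite D) _

theorem edgeFlow_eq_sum (s s' : GState D) :
    edgeFlow PF Z s s' =
      ∑ l ∈ completeTrajs D with (s, s') ∈ l.zip l.tail, Z * trajPF PF l :=
  finsum_mem_setOf_and_eq_sum_filter (setOf_isCompleteTraj_finite D) _

end Flows

theorem statement7_general {D : ℕ}
    (PF : GState D → GState D → ℝ)
    (Z : ℝ) :
    (∀ s : GState D, ¬ IsTerminal s →
      stateFlow PF Z s =
        ∑ s' ∈ Finset.univ.filter (fun s' : GState D => IsChild s s'),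
          edgeFlow PF Z s s') ∧
    (∀ s : GState D, s ≠ initState D →
      stateFlow PF Z s =
        ∑ s'' ∈ Finset.univ.filter (fun s'' : GState D => IsChild s'' s),
          edgeFlow PF Z s'' s) := by
  refine ⟨fun s hs => ?_, fun s hs => ?_⟩
  · simp only [stateFlow_eq_sum, edgeFlow_eq_sum]
    refine Finset.sum_filter_eq_sum_sum_filter_of_existsUnique (fun l hl s' h => ?_)
      (fun l hl hsl => (mem_completeTrajs.1 hl).existsUnique_succ hsl hs) _
    exact ⟨(List.of_mem_zip h).1,
      by simpa using (mem_completeTrajs.1 hl).isChild_of_mem_zip_tail h⟩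
  · simp only [stateFlow_eq_sum, edgeFlow_eq_sum]
    refine Finset.sum_filter_eq_sum_sum_filter_of_existsUnique (fun l hl s'' h => ?_)
      (fun l hl hsl => (mem_completeTrajs.1 hl).existsUnique_pred hsl hs) _
    exact ⟨List.mem_of_mem_tail (List.of_mem_zip h).2,
      by simpa using (mem_completeTrajs.1 hl).isChild_of_mem_zip_tail h⟩

/-- (Flow matching.) For a forward policy `P_F` and `Z > 0`: for every
nonterminal state `s`, `F(s) = Σ_{children s' of s} F(s→s')`, and for every state `s ≠ s₀`,
`F(s) = Σ_{parents s'' of s} F(s''→s)`. -/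
theorem statement7 {D : ℕ} (hD : 1 ≤ D)
    (PF : GState D → GState D → ℝ) (hPF : IsForwardPolicy PF)
    (Z : ℝ) (hZ : 0 < Z) :
    (∀ s : GState D, ¬ IsTerminal s →
      stateFlow PF Z s =
        ∑ s' ∈ Finset.univ.filter (fun s' : GState D => IsChild s s'),
          edgeFlow PF Z s s') ∧
    (∀ s : GState D, s ≠ initState D →
      stateFlow PF Z s =
        ∑ s'' ∈ Finset.univ.filter (fun s'' : GState D => IsChild s'' s),
          edgeFlow PF Z s'' s) :=
  statement7_general PF Z
end
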